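/- arXiv:1603.03009 — 2 statements merged into one kernel-verified Lean document; each statement's English description precedes it below -/
import Mathlib

section
/- Under the assumptions F₋ > F₊ > 0 and F₋ ≠ 2F₊, for every fixed w ∈ ℝ², the function v ↦ D(w, v) attains a unique minimum over ℝ, and the minimizer belongs to the set {w₁, 0, -w₂}. -/
noncomputable def d (Fp Fm x : ℝ) : ℝ := Fp * max x 0 - Fm * min x 0

noncomputable def D (Fp Fm : ℝ) (w : ℝ × ℝ) (v : ℝ) : ℝ :=
  d Fp Fm (v - w.1) + d Fp Fm v + d Fp Fm (v + w.2)

/-!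
`v ↦ D(w, v)` is convex, continuous and coercive, so it attains its minimum, and its set of
minimizers is an interval. Away from the kinks `w₁, 0, -w₂` it is differentiable with derivative a
sum of three slopes from `{F₊, -F₋}`, i.e. one of `3F₊, 2F₊ - F₋, F₊ - 2F₋, -3F₋`; none of these
vanishes, so every minimizer is a kink. An interval inside a finite set is a single point.
-/

open Set Filter Topology

theorem Set.OrdConnected.subsingleton_of_finite {α : Type*} [LinearOrder α] [DenselyOrdered α]
    {s : Set α} (hs : s.OrdConnected) (hfin : s.Finite) : s.Subsingleton := by
  intro x hx y hy
  by_contra hne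
  wlog hxy : x < y generalizing x y
  · exact this hy hx (Ne.symm hne) ((Ne.symm hne).lt_of_le (not_lt.1 hxy))
  exact (Ioo_infinite hxy).mono (Ioo_subset_Icc_self.trans (hs.out hx hy)) hfin

theorem ConvexOn.convex_setOf_forall_le {𝕜 E β : Type*} [Semiring 𝕜] [PartialOrder 𝕜]
    [AddCommMonoid E] [AddCommMonoid β] [PartialOrder β] [IsOrderedAddMonoid β] [SMul 𝕜 E]
    [Module 𝕜 β] [PosSMulMono 𝕜 β] {f : E → β} (hf : ConvexOn 𝕜 univ f) :
    Convex 𝕜 {x | ∀ y, f x ≤ f y} := by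
  have h : {x | ∀ y, f x ≤ f y} = ⋂ y, {x ∈ univ | f x ≤ f y} := by ext; simp
  rw [h]
  exact convex_iInter fun y => hf.convex_le (f y)

section Dissipation

variable {Fp Fm : ℝ}

theorem d_of_nonneg {x : ℝ} (hx : 0 ≤ x) : d Fp Fm x = Fp * x := by
  simp [d, hx]

theorem d_of_nonpos {x : ℝ} (hx : x ≤ 0) : d Fp Fm x = -(Fm * x) := by
  simp [d, hx]

theorem d_eq_max (h : 0 ≤ Fp + Fm) : d Fp Fm = fun x => max (Fp * x) (-(Fm * x)) := by
  ext x
  rcases le_total x 0 with hx | hx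
  · rw [d_of_nonpos hx, max_eq_right (by nlinarith)]
  · rw [d_of_nonneg hx, max_eq_left (by nlinarith)]

theorem convexOn_d (h : 0 ≤ Fp + Fm) : ConvexOn ℝ univ (d Fp Fm) := by
  rw [d_eq_max h]
  exact ((LinearMap.mul ℝ ℝ Fp).convexOn convex_univ).sup
    ((-LinearMap.mul ℝ ℝ Fm).convexOn convex_univ)

theorem convexOn_D (h : 0 ≤ Fp + Fm) (w : ℝ × ℝ) : ConvexOn ℝ univ (D Fp Fm w) := by
  have hd := convexOn_d h
  have h₁ := hd.translate_left (-w.1)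
  have h₃ := hd.translate_left w.2
  rw [preimage_univ] at h₁ h₃
  have hD : D Fp Fm w =
      (d Fp Fm ∘ fun z => z + -w.1) + d Fp Fm + d Fp Fm ∘ fun z => z + w.2 := by
    ext v
    simp [D, sub_eq_add_neg]
  rw [hD]
  exact (h₁.add hd).add h₃

theorem continuous_D (Fp Fm : ℝ) (w : ℝ × ℝ) : Continuous (D Fp Fm w) := by
  unfold D d
  fun_prop

theorem mul_abs_le_d (h : Fp ≤ Fm) (x : ℝ) : Fp * |x| ≤ d Fp Fm x := by
  rcases le_total x 0 with hx | hx
  · rw [d_of_nonpos hx, abs_of_nonpos hx]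
    nlinarith
  · rw [d_of_nonneg hx, abs_of_nonneg hx]

theorem mul_abs_le_D (hp : 0 ≤ Fp) (h : Fp ≤ Fm) (w : ℝ × ℝ) (v : ℝ) :
    Fp * |v| ≤ D Fp Fm w v := by
  have h₁ := mul_abs_le_d h (v - w.1)
  have h₂ := mul_abs_le_d h v
  have h₃ := mul_abs_le_d h (v + w.2)
  have := abs_nonneg (v - w.1)
  have := abs_nonneg (v + w.2)
  unfold D
  nlinarith

theorem tendsto_D_cocompact (hp : 0 < Fp) (h : Fp ≤ Fm) (w : ℝ × ℝ) :
    Tendsto (D Fp Fm w) (cocompact ℝ) atTop :=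
  tendsto_atTop_mono (mul_abs_le_D hp.le h w)
    (tendsto_norm_cocompact_atTop.const_mul_atTop hp)

theorem hasDerivAt_d {x : ℝ} (hx : x ≠ 0) :
    HasDerivAt (d Fp Fm) (if 0 < x then Fp else -Fm) x := by
  rcases hx.lt_or_gt with hx | hx
  · have hd : d Fp Fm =ᶠ[𝓝 x] fun y => -(Fm * y) := by
      filter_upwards [eventually_lt_nhds hx] with y hy using d_of_nonpos hy.le
    rw [if_neg hx.not_gt]
    simpa using ((hasDerivAt_id x).const_mul Fm).neg.congr_of_eventuallyEq hd
  · have hd : d Fp Fm =ᶠ[𝓝 x] fun y => Fp * y := by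
      filter_upwards [eventually_gt_nhds hx] with y hy using d_of_nonneg hy.le
    rw [if_pos hx]
    simpa using ((hasDerivAt_id x).const_mul Fp).congr_of_eventuallyEq hd

theorem hasDerivAt_D {w : ℝ × ℝ} {v : ℝ} (h₁ : v - w.1 ≠ 0) (h₂ : v ≠ 0) (h₃ : v + w.2 ≠ 0) :
    HasDerivAt (D Fp Fm w) ((if 0 < v - w.1 then Fp else -Fm) + (if 0 < v then Fp else -Fm)
      + (if 0 < v + w.2 then Fp else -Fm)) v :=
  ((hasDerivAt_d h₁).comp_sub_const v w.1 |>.add (hasDerivAt_d h₂)).add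
    ((hasDerivAt_d h₃).comp_add_const v w.2)

theorem mem_kinks_of_forall_D_le (hp : 0 < Fp) (hm : Fp < Fm) (hne : Fm ≠ 2 * Fp)
    {w : ℝ × ℝ} {v : ℝ} (hv : ∀ u, D Fp Fm w v ≤ D Fp Fm w u) :
    v ∈ ({w.1, 0, -w.2} : Set ℝ) := by
  by_contra hv'
  simp only [mem_insert_iff, mem_singleton_iff, not_or] at hv'
  obtain ⟨h₁, h₂, h₃⟩ := hv'
  have hderiv := hasDerivAt_D (Fp := Fp) (Fm := Fm) (sub_ne_zero.2 h₁) h₂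
    fun h => h₃ (by linarith)
  have hzero := ((isMinOn_univ_iff.2 hv).isLocalMin univ_mem).hasDerivAt_eq_zero hderiv
  split_ifs at hzero <;> first | linarith | exact hne (by linarith)

end Dissipation

theorem dissipation_unique_min (Fp Fm : ℝ) (hp : 0 < Fp) (hm : Fp < Fm)
    (hne : Fm ≠ 2 * Fp) (w : ℝ × ℝ) :
    (∃! v : ℝ, ∀ u : ℝ, D Fp Fm w v ≤ D Fp Fm w u) ∧
    (∀ v : ℝ, (∀ u : ℝ, D Fp Fm w v ≤ D Fp Fm w u) →
      v ∈ ({w.1, 0, -w.2} : Set ℝ)) := by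
  have hkink : {v | ∀ u, D Fp Fm w v ≤ D Fp Fm w u} ⊆ {w.1, 0, -w.2} :=
    fun v hv => mem_kinks_of_forall_D_le hp hm hne hv
  have hsub : {v | ∀ u, D Fp Fm w v ≤ D Fp Fm w u}.Subsingleton :=
    ((convexOn_D (by linarith) w).convex_setOf_forall_le.ordConnected).subsingleton_of_finite
      ((toFinite _).subset hkink)
  obtain ⟨v₀, hv₀⟩ := (continuous_D Fp Fm w).exists_forall_le (tendsto_D_cocompact hp hm.le w)
  exact ⟨⟨v₀, hv₀, fun v hv => hsub hv hv₀⟩, hkink⟩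
end

section
/- Suppose 2F₊ > F₋ > F₊ > 0. Then for every w ∈ ℝ², D_sh(w) = max_{1 ≤ i ≤ 6} ⟨β_i, w⟩ where β₁ = (-F₊, F₋ - F₊), β₂ = (F₊ - F₋, F₊), β₃ = (F₋, F₊), β₄ = (F₋, F₋ - F₊), β₅ = (F₊ - F₋, -F₋), β₆ = (-F₊, -F₋). -/
noncomputable def Dsh (Fp Fm : ℝ) (w : ℝ × ℝ) : ℝ := ⨅ v : ℝ, D Fp Fm w v

/-- Standard inner product on ℝ². -/
def dot (x y : ℝ × ℝ) : ℝ := x.1 * y.1 + x.2 * y.2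

open Set

section

variable {Fp Fm : ℝ}

lemma d_zero : d Fp Fm 0 = 0 := by
  simp [d]

lemma d_eq_mul_of_nonneg {x : ℝ} (h : 0 ≤ x) : d Fp Fm x = Fp * x := by
  simp [d, max_eq_left h, min_eq_right h]

lemma d_eq_mul_of_nonpos {x : ℝ} (h : x ≤ 0) : d Fp Fm x = -Fm * x := by
  simp [d, max_eq_right h, min_eq_left h]

lemma mul_le_d {a : ℝ} (ha : a ∈ Icc (-Fm) Fp) (x : ℝ) : a * x ≤ d Fp Fm x := by
  rcases le_total 0 x with hx | hx
  · rw [d_eq_mul_of_nonneg hx]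
    exact mul_le_mul_of_nonneg_right ha.2 hx
  · rw [d_eq_mul_of_nonpos hx]
    exact mul_le_mul_of_nonpos_right ha.1 hx

lemma dot_le_D {β : ℝ × ℝ} (h₁ : -β.1 ∈ Icc (-Fm) Fp) (h₀ : β.1 - β.2 ∈ Icc (-Fm) Fp)
    (h₂ : β.2 ∈ Icc (-Fm) Fp) (w : ℝ × ℝ) (v : ℝ) : dot β w ≤ D Fp Fm w v := by
  have := mul_le_d h₁ (v - w.1)
  have := mul_le_d h₀ v
  have := mul_le_d h₂ (v + w.2)
  rw [D, dot]
  linarith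

end

noncomputable def maxSixVertices (Fp Fm : ℝ) (w : ℝ × ℝ) : ℝ :=
  max (dot (-Fp, Fm - Fp) w)
    (max (dot (Fp - Fm, Fp) w)
      (max (dot (Fm, Fp) w)
        (max (dot (Fm, Fm - Fp) w)
          (max (dot (Fp - Fm, -Fm) w) (dot (-Fp, -Fm) w)))))

lemma maxSixVertices_le_D {Fp Fm : ℝ} (h : Fp ≤ 2 * Fm) (h' : Fm ≤ 2 * Fp) (w : ℝ × ℝ)
    (v : ℝ) : maxSixVertices Fp Fm w ≤ D Fp Fm w v := by
  simp only [maxSixVertices, max_le_iff]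
  refine ⟨?_, ?_, ?_, ?_, ?_, ?_⟩ <;>
    exact dot_le_D ⟨by linarith, by linarith⟩ ⟨by linarith, by linarith⟩
      ⟨by linarith, by linarith⟩ w v

lemma exists_D_le_maxSixVertices (Fp Fm : ℝ) (w : ℝ × ℝ) :
    ∃ v, D Fp Fm w v ≤ maxSixVertices Fp Fm w := by
  rcases le_total 0 w.1 with hw₁ | hw₁ <;> rcases le_total 0 w.2 with hw₂ | hw₂
  · refine ⟨0, le_of_eq_of_le (b := dot (Fm, Fp) w) ?_ ?_⟩
    · rw [D, d_eq_mul_of_nonpos (by linarith), d_zero, d_eq_mul_of_nonneg (by linarith), dot]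
      ring
    · simp [maxSixVertices]
  · rcases le_total 0 (w.1 + w.2) with hs | hs
    · refine ⟨-w.2, le_of_eq_of_le (b := dot (Fm, Fm - Fp) w) ?_ ?_⟩
      · rw [D, d_eq_mul_of_nonpos (by linarith), d_eq_mul_of_nonneg (by linarith),
          neg_add_cancel, d_zero, dot]
        ring
      · simp [maxSixVertices]
    · refine ⟨w.1, le_of_eq_of_le (b := dot (Fp - Fm, -Fm) w) ?_ ?_⟩
      · rw [D, sub_self, d_zero, d_eq_mul_of_nonneg hw₁, d_eq_mul_of_nonpos hs, dot]
        ring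
      · simp [maxSixVertices]
  · rcases le_total 0 (w.1 + w.2) with hs | hs
    · refine ⟨w.1, le_of_eq_of_le (b := dot (Fp - Fm, Fp) w) ?_ ?_⟩
      · rw [D, sub_self, d_zero, d_eq_mul_of_nonpos hw₁, d_eq_mul_of_nonneg hs, dot]
        ring
      · simp [maxSixVertices]
    · refine ⟨-w.2, le_of_eq_of_le (b := dot (-Fp, Fm - Fp) w) ?_ ?_⟩
      · rw [D, d_eq_mul_of_nonneg (by linarith), d_eq_mul_of_nonpos (by linarith),
          neg_add_cancel, d_zero, dot]
        ring
      · simp [maxSixVertices]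
  · refine ⟨0, le_of_eq_of_le (b := dot (-Fp, -Fm) w) ?_ ?_⟩
    · rw [D, d_eq_mul_of_nonneg (by linarith), d_zero, d_eq_mul_of_nonpos (by linarith), dot]
      ring
    · simp [maxSixVertices]

theorem Dsh_max_of_six_vertices_general (Fp Fm : ℝ) (h1 : Fp < Fm)
    (h2 : Fm < 2 * Fp) :
    ∀ w : ℝ × ℝ,
      Dsh Fp Fm w =
        max (dot (-Fp, Fm - Fp) w)
          (max (dot (Fp - Fm, Fp) w)
            (max (dot (Fm, Fp) w)
              (max (dot (Fm, Fm - Fp) w)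
                (max (dot (Fp - Fm, -Fm) w) (dot (-Fp, -Fm) w))))) := by
  intro w
  have lower : ∀ v, maxSixVertices Fp Fm w ≤ D Fp Fm w v :=
    maxSixVertices_le_D (by linarith) h2.le w
  obtain ⟨v, upper⟩ := exists_D_le_maxSixVertices Fp Fm w
  exact le_antisymm ((ciInf_le ⟨_, forall_mem_range.2 lower⟩ v).trans upper) (le_ciInf lower)

theorem Dsh_max_of_six_vertices (Fp Fm : ℝ) (hp : 0 < Fp) (h1 : Fp < Fm)
    (h2 : Fm < 2 * Fp) :
    ∀ w : ℝ × ℝ,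
      Dsh Fp Fm w =
        max (dot (-Fp, Fm - Fp) w)
          (max (dot (Fp - Fm, Fp) w)
            (max (dot (Fm, Fp) w)
              (max (dot (Fm, Fm - Fp) w)
                (max (dot (Fp - Fm, -Fm) w) (dot (-Fp, -Fm) w))))) :=
  Dsh_max_of_six_vertices_general Fp Fm h1 h2
end
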